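/- arXiv:1608.04355 — 7 statements merged into one kernel-verified Lean document; each statement's English description precedes it below -/
import Mathlib

section
/- For all nonnegative integers q ≤ t, the sum over k from 0 to t of D_{q,t}(k)² equals C(2q,q)·C(t+1+q, 2q+1), where D_{q,t}(x) = Σ_{i=0}^q (−1)^i C(q,i) C(t−x, q−i) C(x,i) is the discrete Chebyshev polynomial. -/
/-- Generalized binomial coefficient `binom(x, i) = x(x-1)⋯(x-i+1)/i!` for real `x`. -/
noncomputable def rbinom (x : ℝ) (i : ℕ) : ℝ :=
  (descPochhammer ℝ i).eval x / i.factorial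

/-- The discrete Chebyshev polynomial
`D_{q,t}(x) = Σ_{i=0}^q (−1)^i C(q,i) binom(t−x, q−i) binom(x, i)`. -/
noncomputable def discreteChebyshev (q t : ℕ) (x : ℝ) : ℝ :=
  ∑ i ∈ Finset.range (q + 1),
    (-1 : ℝ) ^ i * (q.choose i : ℝ) * rbinom ((t : ℝ) - x) (q - i) * rbinom x i


open Finset

lemma rbinom_zero (x : ℝ) : rbinom x 0 = 1 := by simp [rbinom]

lemma rbinom_succ (x : ℝ) (n : ℕ) :
    rbinom x (n + 1) = rbinom x n * (x - n) / (n + 1) := by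
  simp only [rbinom, descPochhammer_succ_eval, Nat.factorial_succ]
  push_cast
  rw [div_mul_eq_mul_div, div_div]
  ring_nf

lemma rbinom_nat (k n : ℕ) : rbinom (k : ℝ) n = (k.choose n : ℝ) := by
  rw [rbinom, descPochhammer_eval_eq_descFactorial]
  rw [Nat.descFactorial_eq_factorial_mul_choose]
  push_cast
  rw [mul_comm, mul_div_assoc, div_self (by positivity : (n.factorial:ℝ) ≠ 0), mul_one]

lemma rbinom_pascal (x : ℝ) (n : ℕ) :
    rbinom (x + 1) (n + 1) = rbinom x (n + 1) + rbinom x n := by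
  have h1 : (descPochhammer ℝ (n+1)).eval (x+1) = (x+1) * (descPochhammer ℝ n).eval x := by
    rw [descPochhammer_succ_left]
    simp [Polynomial.eval_comp]
  simp only [rbinom, h1, descPochhammer_succ_eval, Nat.factorial_succ]
  push_cast
  have hf : (n.factorial : ℝ) ≠ 0 := by positivity
  field_simp
  ring

lemma descP_reflect (n : ℕ) (x : ℝ) :
    (descPochhammer ℝ n).eval x = (-1)^n * (descPochhammer ℝ n).eval ((n:ℝ) - 1 - x) := by
  induction n generalizing x with
  | zero => simp
  | succ n ih =>
    have h1 : (descPochhammer ℝ (n+1)).eval x = x * (descPochhammer ℝ n).eval (x-1) := by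
      rw [descPochhammer_succ_left]; simp [Polynomial.eval_comp]
    have h2 : ((n+1:ℕ):ℝ) - 1 - x = (n:ℝ) - x := by push_cast; ring
    rw [h1, h2, descPochhammer_succ_eval, ih (x-1)]
    have h3 : (n:ℝ) - 1 - (x - 1) = (n:ℝ) - x := by ring
    rw [h3]
    ring

lemma rbinom_reflect (n : ℕ) (x : ℝ) :
    rbinom x n = (-1)^n * rbinom ((n:ℝ) - 1 - x) n := by
  simp only [rbinom, descP_reflect n x]
  ring

/-- forward difference operator -/
noncomputable def fd (f : ℝ → ℝ) : ℝ → ℝ := fun x => f (x + 1) - f x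

lemma fd_iter_succ' (n : ℕ) (f : ℝ → ℝ) (x : ℝ) :
    fd^[n + 1] f x = fd^[n] f (x + 1) - fd^[n] f x := by
  rw [Function.iterate_succ_apply']
  rfl

lemma fd_iter_eq_sum (n : ℕ) (f : ℝ → ℝ) (x : ℝ) :
    fd^[n] f x = ∑ j ∈ range (n + 1),
      (-1:ℝ)^n * (-1)^j * (n.choose j : ℝ) * f (x + j) := by
  induction n generalizing x with
  | zero => simp
  | succ n ih =>
    rw [fd_iter_succ', ih, ih]
    rw [Finset.sum_range_succ' (fun j => (-1:ℝ)^(n+1) * (-1)^j * ((n+1).choose j : ℝ) * f (x + j))]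
    have hsplit : ∀ j ∈ range (n + 1),
        (-1:ℝ)^(n+1) * (-1)^(j+1) * ((n+1).choose (j+1) : ℝ) * f (x + (j+1:ℕ))
        = (-1:ℝ)^n * (-1)^j * (n.choose j : ℝ) * f ((x+1) + j)
          + ((-1:ℝ)^(n+1) * (-1)^(j+1) * (n.choose (j+1) : ℝ) * f (x + (j+1:ℕ))) := by
      intro j hj
      rw [Nat.choose_succ_succ]
      push_cast
      have h : x + ((j:ℝ)+1) = (x+1) + (j:ℝ) := by ring
      rw [h]
      ring
    rw [Finset.sum_congr rfl hsplit, Finset.sum_add_distrib]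
    have h2 : ∑ j ∈ range (n+1),
        ((-1:ℝ)^(n+1) * (-1)^(j+1) * (n.choose (j+1) : ℝ) * f (x + (j+1:ℕ)))
        = ∑ j ∈ range (n+2), (-(1:ℝ)) * ((-1:ℝ)^n * (-1)^j * (n.choose j : ℝ) * f (x + j)) -
            (-(1:ℝ)) * ((-1:ℝ)^n * (-1)^0 * (n.choose 0 : ℝ) * f (x + (0:ℕ))) := by
      rw [Finset.sum_range_succ' (fun j => (-(1:ℝ)) * ((-1:ℝ)^n * (-1)^j * (n.choose j : ℝ) * f (x + j)))]
      rw [add_sub_assoc]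
      simp only [sub_self, add_zero]
      apply Finset.sum_congr rfl
      intro j hj
      push_cast
      ring
    rw [h2]
    rw [Finset.sum_range_succ (fun j => (-(1:ℝ)) * ((-1:ℝ)^n * (-1)^j * (n.choose j : ℝ) * f (x + j)))]
    rw [Nat.choose_succ_self]
    push_cast
    simp only [neg_one_mul, Finset.sum_neg_distrib, Nat.choose_zero_right, Nat.cast_one,
      zero_mul, neg_zero, mul_one]
    ring

lemma fd_iter_mul (n : ℕ) (f g : ℝ → ℝ) (x : ℝ) :
    fd^[n] (fun y => f y * g y) x =
      ∑ i ∈ range (n + 1), (n.choose i : ℝ) * fd^[i] f x * fd^[n - i] g (x + i) := by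
  induction n generalizing x with
  | zero => simp
  | succ n ih =>
    rw [fd_iter_succ', ih, ih, ← Finset.sum_sub_distrib]
    have key : ∀ i ∈ range (n + 1),
        (n.choose i : ℝ) * fd^[i] f (x+1) * fd^[n - i] g ((x+1) + i)
          - (n.choose i : ℝ) * fd^[i] f x * fd^[n - i] g (x + i)
        = ((n.choose i : ℝ) * fd^[i+1] f x * fd^[(n+1) - (i+1)] g (x + (i+1:ℕ)))
          + ((n.choose i : ℝ) * fd^[i] f x * fd^[(n+1) - i] g (x + i)) := by
      intro i hi
      simp only [mem_range] at hi
      have h1 : (n+1) - (i+1) = n - i := by omega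
      have h2 : (n+1) - i = (n - i) + 1 := by omega
      rw [h1, h2, fd_iter_succ' i f x, fd_iter_succ' (n-i) g (x + i)]
      have h3 : x + ((i+1:ℕ):ℝ) = (x+1) + (i:ℝ) := by push_cast; ring
      have h4 : x + (i:ℝ) + 1 = (x+1) + (i:ℝ) := by ring
      rw [h3, h4]
      ring
    rw [Finset.sum_congr rfl key, Finset.sum_add_distrib]
    -- first sum: reindex
    have h5 : ∑ i ∈ range (n+1), ((n.choose i : ℝ) * fd^[i+1] f x * fd^[(n+1)-(i+1)] g (x + (i+1:ℕ)))
        = ∑ i ∈ range (n+2), ((n.choose (i-1) : ℝ) * (if i = 0 then 0 else 1) * fd^[i] f x * fd^[(n+1)-i] g (x + i)) := by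
      rw [Finset.sum_range_succ' (fun i => ((n.choose (i-1) : ℝ) * (if i = 0 then 0 else 1) * fd^[i] f x * fd^[(n+1)-i] g (x + i)))]
      simp [Nat.add_sub_cancel]
    rw [h5]
    have h6 : ∑ i ∈ range (n+1), ((n.choose i : ℝ) * fd^[i] f x * fd^[(n+1)-i] g (x + i))
        = ∑ i ∈ range (n+2), ((n.choose i : ℝ) * fd^[i] f x * fd^[(n+1)-i] g (x + i)) := by
      symm
      rw [Finset.sum_range_succ]
      simp [Nat.choose_succ_self]
    rw [h6, ← Finset.sum_add_distrib]
    apply Finset.sum_congr rfl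
    intro i _
    rcases Nat.eq_zero_or_pos i with h | h
    · subst h; simp
    · obtain ⟨j, rfl⟩ := Nat.exists_eq_add_of_lt h
      simp only [zero_add, if_neg (Nat.succ_ne_zero _), mul_one, Nat.add_sub_cancel]
      rw [Nat.choose_succ_succ]
      push_cast
      ring

lemma fd_rbinom (m : ℕ) : fd (fun x => rbinom x (m+1)) = fun x => rbinom x m := by
  funext x
  simp only [fd, rbinom_pascal]
  ring

lemma fd_iter_rbinom (q i : ℕ) (h : i ≤ q) :
    fd^[i] (fun x => rbinom x q) = fun x => rbinom x (q - i) := by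
  induction i with
  | zero => simp
  | succ i ih =>
    have hi : i ≤ q := by omega
    rw [Function.iterate_succ_apply', ih hi]
    obtain ⟨m, hm⟩ : ∃ m, q - i = m + 1 := ⟨q - (i+1), by omega⟩
    rw [hm, fd_rbinom]
    have : q - (i+1) = m := by omega
    rw [this]

lemma fd_iter_rbinom_zero (q i : ℕ) (h : q < i) :
    fd^[i] (fun x => rbinom x q) = fun _ => 0 := by
  obtain ⟨j, rfl⟩ : ∃ j, i = (q + 1) + j := ⟨i - (q+1), by omega⟩
  rw [add_comm, Function.iterate_add_apply]
  have h1 : fd^[q+1] (fun x => rbinom x q) = fun _ => (0:ℝ) := by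
    rw [Function.iterate_succ_apply', fd_iter_rbinom q q le_rfl]
    simp only [Nat.sub_self]
    funext x
    simp [fd, rbinom_zero]
  rw [h1]
  clear h h1
  induction j with
  | zero => rfl
  | succ j ihj => rw [Function.iterate_succ_apply, show fd (fun _ => (0:ℝ)) = fun _ => (0:ℝ) by funext x; simp [fd], ihj]

lemma fd_iter_shift (n : ℕ) (h : ℝ → ℝ) (a : ℝ) (x : ℝ) :
    fd^[n] (fun y => h (y + a)) x = fd^[n] h (x + a) := by
  induction n generalizing x with
  | zero => simp
  | succ n ih =>
    rw [fd_iter_succ', fd_iter_succ', ih, ih]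
    ring_nf

lemma neg_pow_sub (q i : ℕ) (h : i ≤ q) : (-1:ℝ)^(q-i) * (-1)^i = (-1)^q := by
  rw [← pow_add]
  congr 1
  omega

lemma neg_pow_self (q : ℕ) : (-1:ℝ)^q * (-1)^q = 1 := by
  rw [← pow_add, show q + q = 2*q by ring, pow_mul]
  norm_num

noncomputable def Ffun (q t : ℕ) : ℝ → ℝ :=
  fun y => rbinom y q * rbinom (y + -((t:ℝ)+1)) q

lemma key1 (q t : ℕ) (x : ℝ) :
    discreteChebyshev q t x = (-1:ℝ)^q * fd^[q] (Ffun q t) x := by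
  have hmul : fd^[q] (Ffun q t) x =
      ∑ i ∈ range (q + 1), ((q.choose i : ℝ)) * fd^[i] (fun y => rbinom y q) x *
        fd^[q - i] (fun y => rbinom (y + -((t:ℝ)+1)) q) (x + i) :=
    fd_iter_mul q _ _ x
  have hterm : ∀ i ∈ range (q+1),
      ((q.choose i : ℝ)) * fd^[i] (fun y => rbinom y q) x *
        fd^[q - i] (fun y => rbinom (y + -((t:ℝ)+1)) q) (x + i)
      = (q.choose i : ℝ) * rbinom x (q-i) * ((-1:ℝ)^i * rbinom ((t:ℝ) - x) i) := by
    intro i hi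
    simp only [mem_range] at hi
    have hi' : i ≤ q := by omega
    rw [fd_iter_rbinom q i hi']
    rw [fd_iter_shift (q-i) (fun z => rbinom z q) (-((t:ℝ)+1)) (x + i)]
    rw [fd_iter_rbinom q (q-i) (by omega)]
    have h1 : q - (q - i) = i := by omega
    rw [h1]
    dsimp only
    rw [rbinom_reflect i (x + (i:ℝ) + -((t:ℝ)+1))]
    have h2 : (i:ℝ) - 1 - (x + (i:ℝ) + -((t:ℝ)+1)) = (t:ℝ) - x := by ring
    rw [h2]
  rw [hmul, Finset.sum_congr rfl hterm, discreteChebyshev, ← Finset.sum_range_reflect]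
  rw [Finset.mul_sum]
  apply Finset.sum_congr rfl
  intro i hi
  simp only [mem_range] at hi
  have hi' : i ≤ q := by omega
  simp only [Nat.add_sub_cancel]
  rw [Nat.choose_symm hi']
  have h3 : q - (q - i) = i := by omega
  rw [h3]
  have h4 : (-1:ℝ)^(q-i) = (-1:ℝ)^q * (-1)^i := by
    have h6 : (-1:ℝ)^(q-i) * ((-1)^i * (-1)^i) = (-1:ℝ)^(q-i) := by rw [neg_pow_self, mul_one]
    rw [← h6, ← mul_assoc, neg_pow_sub q i hi']
  rw [h4]
  ring

lemma key2 (q t : ℕ) (x : ℝ) :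
    discreteChebyshev q t x =
      ∑ j ∈ range (q + 1), (-1:ℝ)^j * (q.choose j : ℝ) * Ffun q t (x + j) := by
  rw [key1, fd_iter_eq_sum, Finset.mul_sum]
  apply Finset.sum_congr rfl
  intro j _
  rw [show (-1:ℝ)^q * ((-1:ℝ)^q * (-1)^j * (q.choose j : ℝ) * Ffun q t (x + j))
      = ((-1:ℝ)^q * (-1)^q) * ((-1)^j * (q.choose j : ℝ) * Ffun q t (x + j)) by ring,
    neg_pow_self]
  ring

lemma key3 (q t : ℕ) (x : ℝ) :
    fd^[2*q] (Ffun q t) x = ((2*q).choose q : ℝ) := by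
  have hmul : fd^[2*q] (Ffun q t) x =
      ∑ i ∈ range (2*q + 1), (((2*q).choose i : ℝ)) * fd^[i] (fun y => rbinom y q) x *
        fd^[2*q - i] (fun y => rbinom (y + -((t:ℝ)+1)) q) (x + i) :=
    fd_iter_mul (2*q) _ _ x
  rw [hmul]
  rw [Finset.sum_eq_single q]
  · rw [fd_iter_rbinom q q le_rfl]
    rw [fd_iter_shift (2*q-q) (fun z => rbinom z q) (-((t:ℝ)+1)) (x + q)]
    rw [show 2*q - q = q by omega, fd_iter_rbinom q q le_rfl]
    dsimp only
    simp [Nat.sub_self, rbinom_zero]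
  · intro i hi hne
    simp only [mem_range] at hi
    rcases Nat.lt_or_ge i q with h | h
    · have : q < 2*q - i := by omega
      rw [fd_iter_shift (2*q-i) (fun z => rbinom z q) (-((t:ℝ)+1)) (x + i),
        fd_iter_rbinom_zero q (2*q-i) this]
      simp
    · have : q < i := by omega
      rw [fd_iter_rbinom_zero q i this]
      simp
  · intro h
    simp only [mem_range] at h
    omega

lemma key4 (q t : ℕ) (x : ℝ) :
    ∑ j ∈ range (q + 1), (-1:ℝ)^j * (q.choose j : ℝ) * discreteChebyshev q t (x - j)
      = (-1:ℝ)^q * ((2*q).choose q : ℝ) := by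
  have hD : ∀ j : ℕ, discreteChebyshev q t (x - j) = (-1:ℝ)^q * fd^[q] (Ffun q t) (x - j) :=
    fun j => key1 q t (x - j)
  calc ∑ j ∈ range (q + 1), (-1:ℝ)^j * (q.choose j : ℝ) * discreteChebyshev q t (x - j)
      = (-1:ℝ)^q * ∑ j ∈ range (q + 1),
          (-1:ℝ)^j * (q.choose j : ℝ) * fd^[q] (Ffun q t) (x - j) := by
        rw [Finset.mul_sum]
        exact Finset.sum_congr rfl fun j _ => by rw [hD j]; ring
    _ = (-1:ℝ)^q * fd^[q] (fd^[q] (Ffun q t)) (x - q) := by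
        congr 1
        rw [fd_iter_eq_sum, ← Finset.sum_range_reflect]
        apply Finset.sum_congr rfl
        intro j hj
        simp only [mem_range, Nat.add_sub_cancel] at hj ⊢
        have hj' : j ≤ q := by omega
        rw [Nat.choose_symm hj']
        have h4 : (-1:ℝ)^(q-j) = (-1:ℝ)^q * (-1)^j := by
          have h6 : (-1:ℝ)^(q-j) * ((-1)^j * (-1)^j) = (-1:ℝ)^(q-j) := by rw [neg_pow_self, mul_one]
          rw [← h6, ← mul_assoc, neg_pow_sub q j hj']
        have h7 : x - ((q - j : ℕ):ℝ) = x - q + ((j:ℕ):ℝ) := by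
          rw [Nat.cast_sub hj']; ring
        rw [h7, h4]
    _ = (-1:ℝ)^q * ((2*q).choose q : ℝ) := by
        rw [← Function.iterate_add_apply, show q + q = 2*q by ring, key3]

lemma sum_range_choose_col (N a : ℕ) :
    ∑ m ∈ range (N + 1), m.choose a = (N + 1).choose (a + 1) := by
  rw [← Nat.sum_Icc_choose]
  apply (Finset.sum_subset _ _).symm
  · intro m hm
    simp only [Finset.mem_Icc, mem_range] at hm ⊢
    omega
  · intro m hm hm'
    simp only [Finset.mem_Icc, mem_range] at hm hm'
    exact Nat.choose_eq_zero_of_lt (by omega)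

lemma choose_conv (a : ℕ) : ∀ (n b : ℕ),
    ∑ m ∈ range (n + 1), (m.choose a) * ((n - m).choose b) = (n + 1).choose (a + b + 1) := by
  intro n
  induction n with
  | zero =>
    intro b
    rw [Finset.sum_range_one]
    rcases Nat.eq_zero_or_pos a with rfl | ha
    · rcases Nat.eq_zero_or_pos b with rfl | hb
      · simp
      · rw [Nat.choose_eq_zero_of_lt hb, mul_zero,
          Nat.choose_eq_zero_of_lt (show 1 < 0 + b + 1 by omega)]
    · rw [Nat.choose_eq_zero_of_lt ha, zero_mul,
        Nat.choose_eq_zero_of_lt (show 1 < a + b + 1 by omega)]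
  | succ n ih =>
    intro b
    rcases Nat.eq_zero_or_pos b with hb | hb
    · subst hb
      simp only [Nat.choose_zero_right, mul_one]
      exact sum_range_choose_col (n+1) a
    · obtain ⟨b', rfl⟩ : ∃ b', b = b' + 1 := ⟨b - 1, by omega⟩
      rw [Finset.sum_range_succ]
      simp only [Nat.sub_self, Nat.choose_eq_zero_of_lt (show 0 < b' + 1 by omega), mul_zero,
        add_zero]
      have hsplit : ∀ m ∈ range (n + 1),
          m.choose a * ((n + 1 - m).choose (b' + 1))
          = m.choose a * ((n - m).choose (b' + 1)) + m.choose a * ((n - m).choose b') := by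
        intro m hm
        simp only [mem_range] at hm
        have : n + 1 - m = (n - m) + 1 := by omega
        rw [this, Nat.choose_succ_succ]
        ring
      rw [Finset.sum_congr rfl hsplit, Finset.sum_add_distrib, ih (b'+1), ih b']
      have h1 : a + (b' + 1) + 1 = (a + b' + 1) + 1 := by omega
      have h2 : a + b' + 1 + 1 = (a + b' + 1) + 1 := by omega
      rw [h1, h2, show (n + 1 + 1).choose (a + b' + 1 + 1)
          = (n + 1).choose (a + b' + 1) + (n + 1).choose (a + b' + 1 + 1)
          from Nat.choose_succ_succ (n+1) (a+b'+1)]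
      exact Nat.add_comm _ _

lemma Ffun_zero_lt (q t m : ℕ) (hm : m < q) : Ffun q t (m : ℝ) = 0 := by
  unfold Ffun
  rw [rbinom_nat, Nat.choose_eq_zero_of_lt hm]
  simp

lemma Ffun_zero_mid (q t m : ℕ) (h1 : t + 1 ≤ m) (h2 : m ≤ t + q) : Ffun q t (m : ℝ) = 0 := by
  unfold Ffun
  have hc : (m : ℝ) + -((t:ℝ) + 1) = ((m - (t+1) : ℕ) : ℝ) := by
    rw [Nat.cast_sub h1]; push_cast; ring
  rw [hc, rbinom_nat, rbinom_nat, Nat.choose_eq_zero_of_lt (show m - (t+1) < q by omega)]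
  simp

lemma Ffun_val (q t m : ℕ) (hm : m ≤ t + q) :
    Ffun q t (m : ℝ) = (-1:ℝ)^q * (m.choose q : ℝ) * ((t + q - m).choose q : ℝ) := by
  unfold Ffun
  rw [rbinom_nat]
  rw [rbinom_reflect q ((m:ℝ) + -((t:ℝ)+1))]
  have hc : (q:ℝ) - 1 - ((m:ℝ) + -((t:ℝ) + 1)) = ((t + q - m : ℕ) : ℝ) := by
    rw [Nat.cast_sub hm]; push_cast; ring
  rw [hc, rbinom_nat]
  ring

theorem discreteChebyshev_sum_sq (q t : ℕ) (hqt : q ≤ t) :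
    ∑ k ∈ Finset.range (t + 1), (discreteChebyshev q t (k : ℝ)) ^ 2 =
      ((2 * q).choose q : ℝ) * ((t + 1 + q).choose (2 * q + 1) : ℝ) := by
  have step1 : ∑ k ∈ range (t + 1), (discreteChebyshev q t (k : ℝ)) ^ 2
      = ∑ j ∈ range (q + 1), ∑ k ∈ range (t + 1),
          (-1:ℝ)^j * (q.choose j : ℝ) * (Ffun q t ((k:ℝ) + j) * discreteChebyshev q t (k : ℝ)) := by
    rw [Finset.sum_comm]
    apply Finset.sum_congr rfl
    intro k _
    rw [sq, key2 q t (k : ℝ), Finset.sum_mul]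
    apply Finset.sum_congr rfl
    intro j _
    ring
  have step2 : ∀ j ∈ range (q + 1),
      ∑ k ∈ range (t + 1), Ffun q t ((k:ℝ) + j) * discreteChebyshev q t (k : ℝ)
      = ∑ m ∈ range (t + q + 1), Ffun q t (m : ℝ) * discreteChebyshev q t ((m:ℝ) - j) := by
    intro j hj
    simp only [mem_range] at hj
    have hsub : Finset.Ico j (t + 1 + j) ⊆ range (t + q + 1) := by
      intro m hm
      simp only [Finset.mem_Ico, mem_range] at hm ⊢
      omega
    rw [← Finset.sum_subset hsub (by
      intro m hm hm'
      simp only [Finset.mem_Ico, mem_range] at hm hm'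
      rcases Nat.lt_or_ge m j with h | h
      · rw [Ffun_zero_lt q t m (by omega), zero_mul]
      · rw [Ffun_zero_mid q t m (by omega) (by omega), zero_mul])]
    rw [Finset.sum_Ico_eq_sum_range]
    have hrange : t + 1 + j - j = t + 1 := by omega
    rw [hrange]
    apply Finset.sum_congr rfl
    intro k _
    have h1 : ((j + k : ℕ) : ℝ) = (k:ℝ) + (j:ℝ) := by push_cast; ring
    rw [h1]
    have h2 : (k:ℝ) + (j:ℝ) - (j:ℝ) = (k:ℝ) := by ring
    rw [h2]
  have step3 : ∑ k ∈ range (t + 1), (discreteChebyshev q t (k : ℝ)) ^ 2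
      = ∑ m ∈ range (t + q + 1), Ffun q t (m : ℝ) *
          ∑ j ∈ range (q + 1), (-1:ℝ)^j * (q.choose j : ℝ) * discreteChebyshev q t ((m:ℝ) - j) := by
    rw [step1]
    rw [Finset.sum_congr rfl (fun j hj => by
      rw [← Finset.mul_sum, step2 j hj, Finset.mul_sum])]
    rw [Finset.sum_comm]
    apply Finset.sum_congr rfl
    intro m _
    rw [Finset.mul_sum]
    apply Finset.sum_congr rfl
    intro j _
    ring
  rw [step3]
  rw [Finset.sum_congr rfl (fun m _ => by rw [key4 q t ((m:ℝ))])]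
  have step4 : ∑ m ∈ range (t + q + 1), Ffun q t (m : ℝ) * ((-1:ℝ)^q * ((2*q).choose q : ℝ))
      = ((2*q).choose q : ℝ) * ∑ m ∈ range (t + q + 1),
          ((m.choose q : ℝ) * ((t + q - m).choose q : ℝ)) := by
    rw [Finset.mul_sum]
    apply Finset.sum_congr rfl
    intro m hm
    simp only [mem_range] at hm
    rw [Ffun_val q t m (by omega)]
    rw [show (-1:ℝ)^q * (m.choose q : ℝ) * ((t + q - m).choose q : ℝ) *
        ((-1:ℝ)^q * ((2*q).choose q : ℝ))
        = ((-1:ℝ)^q * (-1)^q) * ((2*q).choose q : ℝ) *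
          ((m.choose q : ℝ) * ((t + q - m).choose q : ℝ)) from by ring, neg_pow_self]
    ring
  rw [step4]
  have step5 : ∑ m ∈ range (t + q + 1), ((m.choose q : ℝ) * ((t + q - m).choose q : ℝ))
      = ((t + 1 + q).choose (2 * q + 1) : ℝ) := by
    have := choose_conv q (t + q) q
    have hcast : ((∑ m ∈ range (t + q + 1), (m.choose q) * ((t + q - m).choose q) : ℕ) : ℝ)
        = ∑ m ∈ range (t + q + 1), ((m.choose q : ℝ) * ((t + q - m).choose q : ℝ)) := by
      push_cast
      rfl
    rw [← hcast, this]
    congr 2 <;> omega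
  rw [step5]
end

section
/- For integers t > q ≥ 0, the product C(2q,q)·C(t+1+q,2q+1) is at most (t+1)^{2q+2}/(q!)², and consequently for every integer x ∈ {0,1,…,t}, |D_{q,t}(x)| ≤ (t+1)^{q+1}/q!. -/
open Finset fwdDiff

theorem fwdDiff_iter_mul {M R : Type*} [AddCommMonoid M] [CommRing R] (h : M) (f g : M → R)
    (n : ℕ) (x : M) :
    Δ_[h] ^[n] (fun y ↦ f y * g y) x =
      ∑ ij ∈ antidiagonal n,
        (n.choose ij.1 : R) * (Δ_[h] ^[ij.1] f x * Δ_[h] ^[ij.2] g (x + ij.1 • h)) := by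
  induction n generalizing f g with
  | zero => simp
  | succ n ih =>
    have hprod : Δ_[h] (fun y ↦ f y * g y) =
        (fun y ↦ Δ_[h] f y * g (y + h)) + fun y ↦ f y * Δ_[h] g y := by
      ext y; simp only [fwdDiff, Pi.add_apply]; ring
    rw [Function.iterate_succ_apply, hprod, fwdDiff_iter_add, Pi.add_apply, ih, ih, add_comm,
      sum_antidiagonal_choose_succ_mul
        (fun i j ↦ Δ_[h] ^[i] f x * Δ_[h] ^[j] g (x + i • h)) n]
    congr 1
    refine sum_congr rfl fun ij hij ↦ ?_
    rw [Nat.choose_symm_of_eq_add (mem_antidiagonal.mp hij).symm, fwdDiff_iter_comp_add,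
      ← Function.iterate_succ_apply, succ_nsmul, add_assoc]

theorem fwdDiff_iter_choose_eq_ite (j q n : ℕ) :
    Δ_[1] ^[j] (fun x ↦ (x.choose q : ℤ)) n =
      if j ≤ q then (n.choose (q - j) : ℤ) else 0 := by
  split_ifs with hjq
  · obtain ⟨k, rfl⟩ := Nat.exists_eq_add_of_le hjq
    rw [fwdDiff_iter_choose, Nat.add_sub_cancel_left]
  · obtain ⟨r, rfl⟩ := Nat.exists_eq_add_of_lt (not_le.mp hjq)
    have hconst : Δ_[1] ^[q] (fun x ↦ (x.choose q : ℤ)) = fun _ ↦ 1 := by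
      simpa using fwdDiff_iter_choose 0 q
    rw [add_assoc, add_comm, Function.iterate_add_apply, hconst, Function.iterate_succ_apply,
      fwdDiff_const, Function.iterate_fixed (fwdDiff_const (1 : ℕ) (0 : ℤ))]

theorem fwdDiff_iter_comp_tsub {G : Type*} [AddCommGroup G] (f : ℕ → G) {N m j : ℕ}
    (h : m + j ≤ N) :
    Δ_[1] ^[j] (fun x ↦ f (N - x)) m = (-1 : ℤ) ^ j • Δ_[1] ^[j] f (N - m - j) := by
  induction j generalizing m with
  | zero => simp
  | succ j ih =>
    have hshift : N - m - j = N - m - (j + 1) + 1 := by omega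
    rw [Function.iterate_succ_apply', fwdDiff, ih (by omega), ih (by omega), hshift,
      Function.iterate_succ_apply', fwdDiff, pow_succ, mul_neg_one, neg_smul, ← smul_sub,
      ← smul_neg, neg_sub, show N - (m + 1) - j = N - m - (j + 1) by omega]

theorem fwdDiff_iter_choose_tsub {N m j : ℕ} (q : ℕ) (h : m + j ≤ N) :
    Δ_[1] ^[j] (fun x ↦ ((N - x).choose q : ℤ)) m =
      (-1) ^ j * if j ≤ q then ((N - m - j).choose (q - j) : ℤ) else 0 := by
  rw [fwdDiff_iter_comp_tsub (fun x ↦ (x.choose q : ℤ)) h, fwdDiff_iter_choose_eq_ite,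
    smul_eq_mul]

theorem sum_range_mul_fwdDiff {R : Type*} [CommRing R] (f g : ℕ → R) (M a : ℕ)
    (hlo : g a = 0) (hhi : g (a + M) = 0) :
    ∑ k ∈ range M, f k * Δ_[1] g (k + a) =
      -∑ k ∈ range (M - 1), Δ_[1] f k * g (k + a + 1) := by
  cases M with
  | zero => simp
  | succ M =>
    have hfirst : f 0 * g (0 + a) = 0 := by rw [zero_add, hlo, mul_zero]
    have hlast : f M * g (M + a + 1) = 0 := by
      rw [show M + a + 1 = a + (M + 1) by omega, hhi, mul_zero]
    simp only [fwdDiff, mul_sub, sub_mul, sum_sub_distrib, Nat.add_sub_cancel]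
    rw [sum_range_succ (fun k ↦ f k * g (k + a + 1)), sum_range_succ' (fun k ↦ f k * g (k + a)),
      hfirst, hlast]
    simp only [add_zero, add_right_comm _ 1 a]
    ring

theorem sum_range_mul_fwdDiff_iter {R : Type*} [CommRing R] (f g : ℕ → R) (N q : ℕ)
    (hlo : ∀ m < q, g m = 0) (hhi : ∀ m, N ≤ m → m < N + q → g m = 0) :
    ∑ k ∈ range N, f k * Δ_[1] ^[q] g k =
      (-1) ^ q * ∑ k ∈ range (N - q), Δ_[1] ^[q] f k * g (k + q) := by
  induction q generalizing g with
  | zero => simp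
  | succ q ih =>
    conv_lhs => enter [2, k]; rw [Function.iterate_succ_apply]
    conv_rhs => enter [2, 2, k, 1]; rw [Function.iterate_succ_apply']
    rw [ih (Δ_[1] g) (fun m hm ↦ by simp [fwdDiff, hlo m (by omega), hlo (m + 1) (by omega)])
      (fun m hm hm' ↦ by simp [fwdDiff, hhi m hm (by omega), hhi (m + 1) (by omega) (by omega)])]
    rw [sum_range_mul_fwdDiff _ _ _ _ (hlo q (by omega))]
    · rw [Nat.sub_sub, pow_succ]
      simp only [add_assoc]
      ring
    · rcases le_or_gt q N with h | h
      · exact hhi _ (by omega) (by omega)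
      · exact hlo _ (by omega)

theorem Nat.sum_antidiagonal_add_choose_mul_add_choose (a b n : ℕ) :
    ∑ ij ∈ antidiagonal n, (a + ij.1).choose a * (b + ij.2).choose b =
      (a + b + n + 1).choose (a + b + 1) := by
  -- upper negation `C(-(c+1), i) = (-1)^i C(c+i, c)` turns this into Chu–Vandermonde
  have hneg (c i : ℕ) :
      Ring.choose (-((c + 1 : ℕ) : ℤ)) i = (-1) ^ i * ((c + i).choose c : ℤ) := by
    rw [Ring.choose_neg, Units.smul_def, Int.coe_negOnePow_natCast, smul_eq_mul,
      show ((c + 1 : ℕ) : ℤ) + i - 1 = ((c + i : ℕ) : ℤ) by push_cast; ring,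
      Ring.choose_natCast, Nat.choose_symm_add]
  have h := Ring.add_choose_eq n (Commute.all (-((a + 1 : ℕ) : ℤ)) (-((b + 1 : ℕ) : ℤ)))
  rw [show -((a + 1 : ℕ) : ℤ) + -((b + 1 : ℕ) : ℤ) = -((a + b + 1 + 1 : ℕ) : ℤ) by
    push_cast; ring, hneg] at h
  have hsum : ∑ ij ∈ antidiagonal n, Ring.choose (-((a + 1 : ℕ) : ℤ)) ij.1 *
      Ring.choose (-((b + 1 : ℕ) : ℤ)) ij.2 =
      (-1) ^ n * ∑ ij ∈ antidiagonal n, ((a + ij.1).choose a * (b + ij.2).choose b : ℤ) := by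
    rw [mul_sum]
    refine sum_congr rfl fun ij hij ↦ ?_
    rw [hneg, hneg, ← (mem_antidiagonal.mp hij), pow_add]
    ring
  rw [hsum, mul_right_inj' (pow_ne_zero n (by norm_num)),
    show a + b + 1 + n = a + b + n + 1 by ring] at h
  exact_mod_cast h.symm

theorem Nat.descFactorial_add_le_pow (c q : ℕ) :
    (c + q).descFactorial (2 * q + 1) ≤ c ^ (2 * q + 1) := by
  induction q with
  | zero => simp
  | succ q ih =>
    -- the outermost factors `c + q + 1` and `c - q - 1` pair off to at most `c ^ 2`
    have hpair : (c + q + 1) * (c + q - (2 * q + 1)) ≤ c * c := by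
      rcases le_or_gt c q with h | h
      · simp [show c + q - (2 * q + 1) = 0 by omega]
      · obtain ⟨d, rfl⟩ := Nat.exists_eq_add_of_lt h
        rw [show q + d + 1 + q - (2 * q + 1) = d by omega]
        nlinarith
    calc (c + (q + 1)).descFactorial (2 * (q + 1) + 1)
        = (c + q + 1) * (c + q - (2 * q + 1)) * (c + q).descFactorial (2 * q + 1) := by
          rw [show 2 * (q + 1) + 1 = 2 * q + 1 + 1 + 1 by ring, ← add_assoc,
            Nat.succ_descFactorial_succ, Nat.descFactorial_succ, mul_assoc]
      _ ≤ c * c * c ^ (2 * q + 1) := Nat.mul_le_mul hpair ih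
      _ = c ^ (2 * (q + 1) + 1) := by ring

theorem rbinom_natCast (n i : ℕ) : rbinom n i = n.choose i := by
  rw [rbinom, descPochhammer_eval_eq_descFactorial, Nat.descFactorial_eq_factorial_mul_choose,
    Nat.cast_mul, mul_div_cancel_left₀ _ (by positivity)]

def chebyshevWeight (q t m : ℕ) : ℤ := (m.choose q : ℤ) * ((t + q - m).choose q : ℤ)

theorem discreteChebyshev_natCast {q t k : ℕ} (hk : k ≤ t) :
    discreteChebyshev q t k = ((Δ_[1] ^[q] (chebyshevWeight q t) k : ℤ) : ℝ) := by
  have hterm : ∀ ij ∈ antidiagonal q, (q.choose ij.1 : ℤ) *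
      (Δ_[1] ^[ij.1] (fun x ↦ (x.choose q : ℤ)) k *
        Δ_[1] ^[ij.2] (fun x ↦ ((t + q - x).choose q : ℤ)) (k + ij.1 • 1)) =
      (-1) ^ ij.2 * q.choose ij.2 * (t - k).choose ij.1 * k.choose ij.2 := by
    rintro ⟨i, j⟩ hij
    have hij : i + j = q := by simpa using hij
    rw [smul_eq_mul, mul_one, fwdDiff_iter_choose_eq_ite, fwdDiff_iter_choose_tsub _ (by omega),
      if_pos (by omega), if_pos (by omega), show q - i = j by omega, show q - j = i by omega,
      show t + q - (k + i) - j = t - k by omega, Nat.choose_symm_of_eq_add hij.symm]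
    ring
  unfold chebyshevWeight
  rw [fwdDiff_iter_mul, sum_congr rfl hterm, ← Nat.sum_antidiagonal_swap]
  simp only [Prod.fst_swap, Prod.snd_swap]
  rw [Nat.sum_antidiagonal_eq_sum_range_succ
      (fun j i ↦ (-1) ^ j * q.choose j * (t - k).choose i * k.choose j : ℕ → ℕ → ℤ),
    discreteChebyshev, ← Nat.cast_sub hk]
  push_cast
  simp only [rbinom_natCast]

theorem fwdDiff_iter_two_mul_chebyshevWeight {q t k : ℕ} (hk : k + q ≤ t) :
    Δ_[1] ^[2 * q] (chebyshevWeight q t) k = (-1) ^ q * (2 * q).choose q := by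
  unfold chebyshevWeight
  rw [fwdDiff_iter_mul, sum_eq_single_of_mem (q, q) (by simp [two_mul])]
  · rw [smul_eq_mul, mul_one, fwdDiff_iter_choose_eq_ite,
      fwdDiff_iter_choose_tsub _ (by omega), if_pos le_rfl, if_pos le_rfl]
    simp [mul_comm]
  · rintro ⟨i, j⟩ hij hne
    have hij : i + j = 2 * q := by simpa using hij
    rw [smul_eq_mul, mul_one, fwdDiff_iter_choose_eq_ite, fwdDiff_iter_choose_tsub _ (by omega)]
    split_ifs with hi hj
    · exact absurd (Prod.ext (by omega) (by omega)) hne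
    all_goals simp

theorem sum_range_chebyshevWeight_add (q t : ℕ) :
    ∑ k ∈ range (t + 1 - q), chebyshevWeight q t (k + q) = (t + q + 1).choose (2 * q + 1) := by
  rcases le_or_gt q t with hqt | hqt
  · obtain ⟨n, rfl⟩ := Nat.exists_eq_add_of_le hqt
    have h := Nat.sum_antidiagonal_add_choose_mul_add_choose q q n
    rw [Nat.sum_antidiagonal_eq_sum_range_succ
      (fun i j ↦ (q + i).choose q * (q + j).choose q)] at h
    rw [show q + n + 1 - q = n + 1 by omega, show q + n + q + 1 = q + q + n + 1 by ring,
      show 2 * q + 1 = q + q + 1 by ring, ← h]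
    push_cast
    refine sum_congr rfl fun k hk ↦ ?_
    have hk : k ≤ n := Nat.lt_succ_iff.mp (mem_range.mp hk)
    rw [chebyshevWeight, add_comm k q, show q + n + q - (q + k) = q + (n - k) by omega]
  · rw [show t + 1 - q = 0 by omega, range_zero, sum_empty,
      Nat.choose_eq_zero_of_lt (show t + q + 1 < 2 * q + 1 by omega), Nat.cast_zero]

theorem sum_range_discreteChebyshev_sq (q t : ℕ) :
    ∑ k ∈ range (t + 1), discreteChebyshev q t k ^ 2 =
      (2 * q).choose q * (t + 1 + q).choose (2 * q + 1) := by
  have hlo : ∀ m < q, chebyshevWeight q t m = 0 := fun m hm ↦ by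
    simp [chebyshevWeight, Nat.choose_eq_zero_of_lt hm]
  have hhi : ∀ m, t + 1 ≤ m → m < t + 1 + q → chebyshevWeight q t m = 0 := fun m _ hm ↦ by
    simp [chebyshevWeight, Nat.choose_eq_zero_of_lt (show t + q - m < q by omega)]
  have hint : ∑ k ∈ range (t + 1), (Δ_[1] ^[q] (chebyshevWeight q t) k) ^ 2 =
      (2 * q).choose q * (t + 1 + q).choose (2 * q + 1) := by
    calc ∑ k ∈ range (t + 1), (Δ_[1] ^[q] (chebyshevWeight q t) k) ^ 2
        = (-1) ^ q * ∑ k ∈ range (t + 1 - q),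
            Δ_[1] ^[q] (Δ_[1] ^[q] (chebyshevWeight q t)) k * chebyshevWeight q t (k + q) := by
          simp only [sq]
          exact sum_range_mul_fwdDiff_iter _ _ _ _ hlo hhi
      _ = (-1) ^ q * ∑ k ∈ range (t + 1 - q),
            (-1) ^ q * (2 * q).choose q * chebyshevWeight q t (k + q) := by
          congr 1
          refine sum_congr rfl fun k hk ↦ ?_
          rw [← Function.iterate_add_apply, ← two_mul,
            fwdDiff_iter_two_mul_chebyshevWeight (by rw [mem_range] at hk; omega)]
      _ = (2 * q).choose q * (t + 1 + q).choose (2 * q + 1) := by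
          rw [← mul_sum, sum_range_chebyshevWeight_add, ← mul_assoc, ← mul_assoc, ← pow_add,
            Even.neg_one_pow ⟨q, rfl⟩, one_mul, add_right_comm]
  rw [sum_congr rfl fun k hk ↦ by
    rw [discreteChebyshev_natCast (Nat.lt_succ_iff.mp (mem_range.mp hk))]]
  exact_mod_cast hint

theorem centralBinom_mul_choose_mul_factorial_sq_le (q t : ℕ) :
    (2 * q).choose q * (t + 1 + q).choose (2 * q + 1) * q.factorial ^ 2 ≤
      (t + 1) ^ (2 * q + 2) :=
  calc (2 * q).choose q * (t + 1 + q).choose (2 * q + 1) * q.factorial ^ 2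
      = (2 * q).factorial * (t + 1 + q).choose (2 * q + 1) := by
        rw [← Nat.choose_mul_factorial_mul_factorial (show q ≤ 2 * q by omega),
          show 2 * q - q = q by omega]
        ring
    _ ≤ (2 * q + 1).factorial * (t + 1 + q).choose (2 * q + 1) :=
        Nat.mul_le_mul_right _ (Nat.factorial_le (by omega))
    _ = (t + 1 + q).descFactorial (2 * q + 1) :=
        (Nat.descFactorial_eq_factorial_mul_choose _ _).symm
    _ ≤ (t + 1) ^ (2 * q + 1) := Nat.descFactorial_add_le_pow (t + 1) q
    _ ≤ (t + 1) ^ (2 * q + 2) := Nat.pow_le_pow_right (by omega) (by omega)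

theorem discreteChebyshev_abs_le_general (q t : ℕ) :
    ((2 * q).choose q : ℝ) * ((t + 1 + q).choose (2 * q + 1) : ℝ) ≤
        ((t : ℝ) + 1) ^ (2 * q + 2) / (q.factorial : ℝ) ^ 2 ∧
      ∀ x : ℕ, x ≤ t →
        |discreteChebyshev q t (x : ℝ)| ≤ ((t : ℝ) + 1) ^ (q + 1) / (q.factorial : ℝ) := by
  have hbound : ((2 * q).choose q : ℝ) * ((t + 1 + q).choose (2 * q + 1) : ℝ) ≤
      ((t : ℝ) + 1) ^ (2 * q + 2) / (q.factorial : ℝ) ^ 2 := by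
    rw [le_div_iff₀ (by positivity)]
    exact_mod_cast centralBinom_mul_choose_mul_factorial_sq_le q t
  refine ⟨hbound, fun x hx ↦ abs_le_of_sq_le_sq ?_ (by positivity)⟩
  calc discreteChebyshev q t x ^ 2
      ≤ ∑ k ∈ range (t + 1), discreteChebyshev q t k ^ 2 :=
        single_le_sum (f := fun k : ℕ ↦ discreteChebyshev q t k ^ 2) (fun _ _ ↦ sq_nonneg _)
          (mem_range.mpr (by omega))
    _ = (2 * q).choose q * (t + 1 + q).choose (2 * q + 1) := sum_range_discreteChebyshev_sq q t
    _ ≤ ((t : ℝ) + 1) ^ (2 * q + 2) / (q.factorial : ℝ) ^ 2 := hbound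
    _ = (((t : ℝ) + 1) ^ (q + 1) / q.factorial) ^ 2 := by ring

theorem discreteChebyshev_abs_le (q t : ℕ) (hqt : q < t) :
    ((2 * q).choose q : ℝ) * ((t + 1 + q).choose (2 * q + 1) : ℝ) ≤
        ((t : ℝ) + 1) ^ (2 * q + 2) / (q.factorial : ℝ) ^ 2 ∧
      ∀ x : ℕ, x ≤ t →
        |discreteChebyshev q t (x : ℝ)| ≤ ((t : ℝ) + 1) ^ (q + 1) / (q.factorial : ℝ) :=
  discreteChebyshev_abs_le_general q t
end

section
/- For any real x ≤ −1 and integers t > q ≥ 0, D_{q,t}(x) ≥ C(t+1+q, q), where D_{q,t}(x) = Σ_{i=0}^q (−1)^i binom(q,i) binom(t−x,q−i) binom(x,i). -/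
lemma descPochhammer_eval_prod (n : ℕ) (x : ℝ) :
    (descPochhammer ℝ n).eval x = ∏ j ∈ Finset.range n, (x - j) := by
  induction n with
  | zero => simp
  | succ n ih => rw [descPochhammer_succ_eval, ih, Finset.prod_range_succ]

lemma aux_neg (i : ℕ) (x : ℝ) (hx : x ≤ -1) : 1 ≤ (-1 : ℝ) ^ i * rbinom x i := by
  have hfac : (0 : ℝ) < i.factorial := by positivity
  rw [rbinom, descPochhammer_eval_prod]
  have h1 : (-1 : ℝ) ^ i * ∏ j ∈ Finset.range i, (x - j) =
      ∏ j ∈ Finset.range i, ((j : ℝ) - x) := by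
    simp_rw [show ∀ j:ℕ, (j:ℝ) - x = -1 * (x - j) from fun j => by ring,
      Finset.prod_mul_distrib, Finset.prod_const, Finset.card_range]
  rw [← mul_div_assoc, h1, le_div_iff₀ hfac, one_mul]
  calc (i.factorial : ℝ) = ∏ j ∈ Finset.range i, ((j : ℝ) + 1) := by
        rw_mod_cast [Finset.prod_range_add_one_eq_factorial]
    _ ≤ ∏ j ∈ Finset.range i, ((j : ℝ) - x) := by
        apply Finset.prod_le_prod
        · intro j _; positivity
        · intro j _; linarith

lemma aux_tx (k t : ℕ) (hk : k ≤ t + 1) (x : ℝ) (hx : x ≤ -1) :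
    ((t + 1).choose k : ℝ) ≤ rbinom ((t : ℝ) - x) k := by
  have hfac : (0 : ℝ) < k.factorial := by positivity
  rw [rbinom, descPochhammer_eval_prod, le_div_iff₀ hfac]
  have key : ((t + 1).choose k : ℝ) * k.factorial = (descPochhammer ℝ k).eval ((t + 1 : ℕ) : ℝ) := by
    rw [descPochhammer_eval_eq_descFactorial]
    rw_mod_cast [Nat.descFactorial_eq_factorial_mul_choose]
    push_cast; ring
  rw [key, descPochhammer_eval_prod]
  apply Finset.prod_le_prod
  · intro j hj
    have hj' : j < t + 1 := lt_of_lt_of_le (Finset.mem_range.mp hj) hk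
    have : (j : ℝ) < (t + 1 : ℕ) := by exact_mod_cast hj'
    push_cast at this ⊢
    linarith
  · intro j hj
    push_cast
    linarith

theorem discreteChebyshev_ge_of_le_neg_one (q t : ℕ) (hqt : q < t)
    (x : ℝ) (hx : x ≤ -1) :
    ((t + 1 + q).choose q : ℝ) ≤ discreteChebyshev q t x := by
  have hvdm : (t + 1 + q).choose q =
      ∑ i ∈ Finset.range (q + 1), q.choose i * (t + 1).choose (q - i) := by
    rw [show t + 1 + q = q + (t + 1) by ring, Nat.add_choose_eq]
    rw [Finset.Nat.sum_antidiagonal_eq_sum_range_succ_mk]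
  rw [hvdm, discreteChebyshev]
  push_cast
  apply Finset.sum_le_sum
  intro i hi
  have hiq : i ≤ q := Nat.lt_succ_iff.mp (Finset.mem_range.mp hi)
  have h2 := aux_neg i x hx
  have h1 := aux_tx (q - i) t (by omega) x hx
  have hc : (0 : ℝ) ≤ q.choose i := by positivity
  have hb : (0 : ℝ) ≤ ((t + 1).choose (q - i) : ℝ) := by positivity
  have hr : (0 : ℝ) ≤ rbinom ((t : ℝ) - x) (q - i) := le_trans hb h1
  have heq : (-1 : ℝ) ^ i * (q.choose i : ℝ) * rbinom ((t : ℝ) - x) (q - i) * rbinom x i =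
      (q.choose i : ℝ) * rbinom ((t : ℝ) - x) (q - i) * ((-1 : ℝ) ^ i * rbinom x i) := by ring
  rw [heq]
  calc (q.choose i : ℝ) * ((t + 1).choose (q - i) : ℝ)
      ≤ (q.choose i : ℝ) * rbinom ((t : ℝ) - x) (q - i) := by
        exact mul_le_mul_of_nonneg_left h1 hc
    _ = (q.choose i : ℝ) * rbinom ((t : ℝ) - x) (q - i) * 1 := by ring
    _ ≤ (q.choose i : ℝ) * rbinom ((t : ℝ) - x) (q - i) * ((-1 : ℝ) ^ i * rbinom x i) := by
        exact mul_le_mul_of_nonneg_left h2 (mul_nonneg hc hr)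
end

section
/- For integers t > q ≥ √(8(t+1)·ln(t+1)) (with t+1 ≥ 2), the binomial coefficient C(t+1+q, q) is at least e^{q²/(8(t+1))} · (t+1)^{q+1}/q!. -/
/-!
Writing `T = t + 1`, we have `q! · C(T + q, q) = ∏_{i=1}^q (T + i) = T^q ∏_{i=1}^q (1 + i/T)`.
Since `q ≤ T`, every `i/T` lies in `[0, 1]`, where `1 + y ≥ e^{y/2}`; so the product is at least
`e^{q(q+1)/(4T)} ≥ e^{q²/(4T)} = e^{q²/(8T)} · e^{q²/(8T)}`, and the hypothesis on `q` says exactly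
that the second factor is at least `T`.
-/

open Finset Real

namespace Real

lemma exp_half_le_one_add {y : ℝ} (hy₀ : 0 ≤ y) (hy₁ : y ≤ 1) : exp (y / 2) ≤ 1 + y := by
  have hpos : 0 < 1 + y := by linarith
  rw [← exp_log hpos, exp_le_exp]
  calc y / 2 ≤ 1 - (1 + y)⁻¹ := by
        rw [inv_eq_one_div, one_sub_div hpos.ne', div_le_div_iff₀ two_pos hpos]
        nlinarith
    _ ≤ log (1 + y) := one_sub_inv_le_log_of_pos hpos

lemma exp_mul_succ_div_le_prod_one_add {T : ℝ} {q : ℕ} (hqT : (q : ℝ) ≤ T) :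
    exp (q * (q + 1) / (4 * T)) ≤ ∏ i ∈ range q, (1 + (i + 1) / T) := by
  induction q with
  | zero => simp
  | succ q ih =>
    push_cast at hqT ⊢
    have hT : 0 < T := by linarith [q.cast_nonneg (α := ℝ)]
    have hfactor : exp ((q + 1) / T / 2) ≤ 1 + (q + 1) / T :=
      exp_half_le_one_add (by positivity) ((div_le_one hT).2 hqT)
    calc exp ((q + 1) * (q + 1 + 1) / (4 * T))
        = exp (q * (q + 1) / (4 * T)) * exp ((q + 1) / T / 2) := by
          rw [← exp_add]; congr 1; field_simp; ring
      _ ≤ (∏ i ∈ range q, (1 + (i + 1) / T)) * (1 + (q + 1) / T) :=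
          mul_le_mul (ih (by linarith)) hfactor (exp_nonneg _) (by positivity)
      _ = ∏ i ∈ range (q + 1), (1 + ((i : ℕ) + 1 : ℝ) / T) := (prod_range_succ _ _).symm

lemma log_le_sq_div_of_sqrt_mul_log_le {a T x : ℝ} (ha : 0 < a) (h : √(a * log T) ≤ x) :
    log T ≤ x ^ 2 / a := by
  rw [le_div_iff₀ ha, mul_comm]
  exact (sqrt_le_iff.mp h).2

end Real

lemma Nat.factorial_mul_choose_add_eq_pow_mul_prod {n : ℕ} (hn : 0 < n) (q : ℕ) :
    (q.factorial * (n + q).choose q : ℝ) = (n : ℝ) ^ q * ∏ i ∈ range q, (1 + (i + 1) / (n : ℝ)) := by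
  obtain ⟨m, rfl⟩ := Nat.exists_eq_add_of_lt hn
  rw [zero_add, ← Nat.cast_mul, ← ascFactorial_eq_factorial_mul_choose, ascFactorial_eq_prod_range,
    pow_eq_prod_const, ← prod_mul_distrib]
  push_cast
  refine prod_congr rfl fun i _ => ?_
  field_simp
  ring

theorem choose_ge_exp_mul_general (q t : ℕ) (hqt : q < t)
    (hq : Real.sqrt (8 * ((t : ℝ) + 1) * Real.log ((t : ℝ) + 1)) ≤ (q : ℝ)) :
    Real.exp ((q : ℝ) ^ 2 / (8 * ((t : ℝ) + 1))) * ((t : ℝ) + 1) ^ (q + 1) / (q.factorial : ℝ)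
      ≤ ((t + 1 + q).choose q : ℝ) := by
  set T : ℝ := (t : ℝ) + 1
  have hT : 0 < T := by positivity
  have hqT : (q : ℝ) ≤ T := by unfold T; exact_mod_cast (by omega : q ≤ t + 1)
  have hlog : log T ≤ (q : ℝ) ^ 2 / (8 * T) :=
    log_le_sq_div_of_sqrt_mul_log_le (by positivity) hq
  have hexp : exp ((q : ℝ) ^ 2 / (8 * T)) * T ≤ exp (q * (q + 1) / (4 * T)) := by
    calc exp ((q : ℝ) ^ 2 / (8 * T)) * T
        ≤ exp ((q : ℝ) ^ 2 / (8 * T)) * exp ((q : ℝ) ^ 2 / (8 * T)) := by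
          gcongr; rwa [← exp_le_exp, exp_log hT] at hlog
      _ ≤ exp (q * (q + 1) / (4 * T)) := by
          rw [← exp_add, exp_le_exp, ← add_div, div_le_div_iff₀ (by positivity) (by positivity)]
          nlinarith [q.cast_nonneg (α := ℝ)]
  have hchoose := Nat.factorial_mul_choose_add_eq_pow_mul_prod (Nat.succ_pos t) q
  push_cast at hchoose
  rw [div_le_iff₀ (by positivity), mul_comm _ (q.factorial : ℝ), hchoose]
  calc exp ((q : ℝ) ^ 2 / (8 * T)) * T ^ (q + 1)
      = T ^ q * (exp ((q : ℝ) ^ 2 / (8 * T)) * T) := by ring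
    _ ≤ T ^ q * ∏ i ∈ range q, (1 + (i + 1) / T) := by
      gcongr
      exact hexp.trans (exp_mul_succ_div_le_prod_one_add hqT)

theorem choose_ge_exp_mul (q t : ℕ) (hqt : q < t) (ht : 2 ≤ t + 1)
    (hq : Real.sqrt (8 * ((t : ℝ) + 1) * Real.log ((t : ℝ) + 1)) ≤ (q : ℝ)) :
    Real.exp ((q : ℝ) ^ 2 / (8 * ((t : ℝ) + 1))) * ((t : ℝ) + 1) ^ (q + 1) / (q.factorial : ℝ)
      ≤ ((t + 1 + q).choose q : ℝ) :=
  choose_ge_exp_mul_general q t hqt hq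
end

section
/- Let ε ∈ (0,1), let s ≥ 1, let t ≥ 1 be an integer, and set q = ⌈√(1/ε)·ln(2s)⌉. Define P(x) = T_q(x/t) where T_q is the degree-q Chebyshev polynomial. Then: (i) if x ∈ {0,1,…,t} then |P(x)| ≤ 1; (ii) if t < x < (1+ε)t then P(x) > 1; (iii) if x ≥ (1+ε)t then P(x) ≥ s. -/
open Polynomial.Chebyshev in
theorem T_complex_cosh (z : ℂ) (n : ℤ) :
    (Polynomial.Chebyshev.T ℂ n).eval (Complex.cosh z) = Complex.cosh (n * z) := by
  rw [← Complex.cos_mul_I, T_complex_cos, ← Complex.cos_mul_I]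
  ring_nf

theorem T_real_cosh (u : ℝ) (n : ℤ) :
    (Polynomial.Chebyshev.T ℝ n).eval (Real.cosh u) = Real.cosh (n * u) := by
  have := T_complex_cosh u n
  have h1 : (Complex.cosh u) = ((Real.cosh u : ℝ) : ℂ) := by
    simp [Complex.ofReal_cosh]
  have h2 : Complex.cosh ((n : ℂ) * u) = ((Real.cosh (n * u) : ℝ) : ℂ) := by
    push_cast
    simp [Complex.ofReal_cosh]
  rw [h1, h2, ← Polynomial.Chebyshev.complex_ofReal_eval_T] at this
  exact_mod_cast this

theorem exists_cosh_eq {y : ℝ} (hy : 1 ≤ y) :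
    ∃ u : ℝ, 0 ≤ u ∧ Real.cosh u = y := by
  set a := y + Real.sqrt (y ^ 2 - 1) with ha
  have hsq : 0 ≤ y ^ 2 - 1 := by nlinarith
  have hsqrt : Real.sqrt (y ^ 2 - 1) ^ 2 = y ^ 2 - 1 := Real.sq_sqrt hsq
  have ha1 : 1 ≤ a := by
    have := Real.sqrt_nonneg (y ^ 2 - 1); simp only [ha]; linarith
  have hapos : 0 < a := by linarith
  refine ⟨Real.log a, Real.log_nonneg ha1, ?_⟩
  rw [Real.cosh_eq, Real.exp_neg, Real.exp_log hapos]
  have hprod : a * (y - Real.sqrt (y ^ 2 - 1)) = 1 := by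
    simp only [ha]; linear_combination (-1 : ℝ) * hsqrt
  have hinv : a⁻¹ = y - Real.sqrt (y ^ 2 - 1) := inv_eq_of_mul_eq_one_right hprod
  rw [hinv]; simp only [ha]; ring

theorem cosh_sqrt_le {ε : ℝ} (h0 : 0 < ε) (h1 : ε ≤ 1) :
    Real.cosh (Real.sqrt ε) ≤ 1 + ε := by
  set x := Real.sqrt ε with hx
  have hx0 : 0 ≤ x := Real.sqrt_nonneg ε
  have hx2 : x ^ 2 = ε := Real.sq_sqrt h0.le
  have hx1 : x ≤ 1 := by nlinarith
  have hb1 := Real.exp_bound (x := x) (by rw [abs_of_nonneg hx0]; exact hx1) (n := 2) (by norm_num)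
  have hb2 := Real.exp_bound (x := -x) (by rw [abs_neg, abs_of_nonneg hx0]; exact hx1) (n := 2) (by norm_num)
  rw [abs_sub_le_iff] at hb1 hb2
  have e1 := hb1.1
  have e2 := hb2.1
  simp only [Finset.sum_range_succ, Finset.sum_range_zero] at e1 e2
  norm_num at e1 e2
  rw [Real.cosh_eq]
  nlinarith

theorem chebyshev_ptf (ε : ℝ) (hε : ε ∈ Set.Ioo (0:ℝ) 1) (s : ℝ) (hs : 1 ≤ s)
    (t : ℕ) (ht : 1 ≤ t) (q : ℕ)
    (hq : (q : ℝ) = ⌈Real.sqrt (1 / ε) * Real.log (2 * s)⌉₊)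
    (P : ℝ → ℝ) (hP : ∀ x : ℝ, P x = (Polynomial.Chebyshev.T ℝ q).eval (x / t)) :
    (∀ x : ℕ, x ≤ t → |P x| ≤ 1) ∧
    (∀ x : ℝ, (t : ℝ) < x → x < (1 + ε) * t → 1 < P x) ∧
    (∀ x : ℝ, (1 + ε) * t ≤ x → s ≤ P x) := by
  obtain ⟨hε0, hε1⟩ := hε
  have htpos : (0:ℝ) < t := by exact_mod_cast ht
  have hqn : q = ⌈Real.sqrt (1 / ε) * Real.log (2 * s)⌉₊ := by exact_mod_cast hq
  have hlog : 0 < Real.log (2 * s) := Real.log_pos (by linarith)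
  have hsqrt_inv : 0 < Real.sqrt (1 / ε) := Real.sqrt_pos.2 (by positivity)
  have hq1 : 1 ≤ q := by
    rw [hqn]; exact Nat.one_le_iff_ne_zero.2 (by
      simp only [ne_eq, Nat.ceil_eq_zero, not_le]; positivity)
  have hqge : Real.sqrt (1 / ε) * Real.log (2 * s) ≤ (q : ℝ) := by
    rw [hq]; exact Nat.le_ceil _
  have hsqmul : Real.sqrt (1 / ε) * Real.sqrt ε = 1 := by
    rw [← Real.sqrt_mul (by positivity), one_div_mul_cancel hε0.ne', Real.sqrt_one]
  have hqe : Real.log (2 * s) ≤ (q : ℝ) * Real.sqrt ε := by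
    have hse : 0 < Real.sqrt ε := Real.sqrt_pos.2 hε0
    calc Real.log (2 * s) = Real.sqrt (1 / ε) * Real.log (2 * s) * Real.sqrt ε := by
          rw [mul_comm (Real.sqrt (1/ε)), mul_assoc, hsqmul, mul_one]
      _ ≤ (q : ℝ) * Real.sqrt ε := by nlinarith
  refine ⟨?_, ?_, ?_⟩
  · intro x hx
    rw [hP]
    set y : ℝ := (x : ℝ) / t with hy
    have hy0 : 0 ≤ y := by positivity
    have hy1 : y ≤ 1 := by
      rw [hy, div_le_one htpos]; exact_mod_cast hx
    rw [← Real.cos_arccos (by linarith) hy1, Polynomial.Chebyshev.T_real_cos]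
    exact Real.abs_cos_le_one _
  · intro x hx1 hx2
    rw [hP]
    set y : ℝ := x / t with hy
    have hy1 : 1 < y := by rw [hy, lt_div_iff₀ htpos]; linarith
    obtain ⟨u, hu0, hcu⟩ := exists_cosh_eq hy1.le
    have hune : u ≠ 0 := by
      intro h; rw [h, Real.cosh_zero] at hcu; linarith
    rw [← hcu, T_real_cosh]
    have : (1:ℝ) = Real.cosh 0 := by rw [Real.cosh_zero]
    rw [this, Real.cosh_lt_cosh]
    rw [abs_zero, abs_of_nonneg (by positivity)]
    have hq0 : (0:ℝ) < ((q:ℤ):ℝ) := by exact_mod_cast hq1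
    have hu0' : 0 < u := lt_of_le_of_ne hu0 (Ne.symm hune)
    positivity
  · intro x hx
    rw [hP]
    set y : ℝ := x / t with hy
    have hy1 : 1 + ε ≤ y := by rw [hy, le_div_iff₀ htpos]; linarith
    obtain ⟨u, hu0, hcu⟩ := exists_cosh_eq (by linarith : (1:ℝ) ≤ y)
    have hsu : Real.sqrt ε ≤ u := by
      have h1 : Real.cosh (Real.sqrt ε) ≤ Real.cosh u := by
        rw [hcu]; exact le_trans (cosh_sqrt_le hε0 hε1.le) hy1
      rw [Real.cosh_le_cosh, abs_of_nonneg (Real.sqrt_nonneg _), abs_of_nonneg hu0] at h1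
      exact h1
    rw [← hcu, T_real_cosh]
    have hqu : Real.log (2 * s) ≤ ((q:ℤ):ℝ) * u := by
      have hcast : ((q:ℤ):ℝ) = (q:ℝ) := by push_cast; ring
      rw [hcast]
      calc Real.log (2 * s) ≤ (q:ℝ) * Real.sqrt ε := hqe
        _ ≤ (q:ℝ) * u := by
            apply mul_le_mul_of_nonneg_left hsu (by positivity)
    calc s = 2 * s / 2 := by ring
      _ = Real.exp (Real.log (2 * s)) / 2 := by rw [Real.exp_log (by linarith)]
      _ ≤ Real.exp (((q:ℤ):ℝ) * u) / 2 := by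
          apply div_le_div_of_nonneg_right _ (by norm_num)
          exact Real.exp_le_exp.2 hqu
      _ ≤ Real.cosh (((q:ℤ):ℝ) * u) := by
          rw [Real.cosh_eq]
          have := Real.exp_pos (-(((q:ℤ):ℝ) * u))
          linarith
end

section
/- Suppose the sum of n n-bit natural numbers A_1,…,A_n is decomposed by blocks: partition each A_i into m blocks of ℓ bits (mℓ = n), let S_k = Σ_{i=1}^n Σ_{j=1}^ℓ A_{i,(k−1)ℓ+j}·2^{j−1} be the sum of block k, and suppose each S_k < 2^{tℓ} where t = 1 + ⌈(log₂ n)/ℓ⌉. Writing S_k = Σ_{r=0}^{t−1} T_k^r · 2^{rℓ} with each T_k^r < 2^ℓ, and defining y_r = Σ_{k=1}^m T_k^r · 2^{(k+r−1)ℓ}, then Σ_{i=1}^n A_i = Σ_{r=0}^{t−1} y_r. -/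
/-!
Cutting every `n = m ℓ`-bit summand into `m` blocks of `ℓ` bits and summing blockwise gives
`∑ i, A_i = ∑ k, S_k 2^{kℓ}`. Expanding each block sum in base `2^ℓ`, `S_k = ∑ r, T_k^r 2^{rℓ}`,
and collecting the digits by their offset `r` instead of by their block `k` turns this double sum
into `∑ r, y_r`.
-/

open Finset

theorem sum_range_mul_eq_sum_blocks {M : Type*} [AddCommMonoid M] (f : ℕ → M) (m ℓ : ℕ) :
    ∑ j ∈ range (m * ℓ), f j = ∑ k ∈ range m, ∑ j ∈ range ℓ, f (k * ℓ + j) := by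
  induction m with
  | zero => simp
  | succ m ih => rw [Nat.succ_mul, sum_range_add, ih, sum_range_succ]

theorem sum_range_mul_ite_pow_eq_sum_blocks {R : Type*} [CommSemiring R] (p : ℕ → Prop)
    [DecidablePred p] (b : R) (m ℓ : ℕ) :
    ∑ j ∈ range (m * ℓ), (if p j then b ^ j else 0) =
      ∑ k ∈ range m, (∑ j ∈ range ℓ, if p (k * ℓ + j) then b ^ j else 0) * b ^ (k * ℓ) := by
  rw [sum_range_mul_eq_sum_blocks]
  refine sum_congr rfl fun k _ => ?_
  rw [sum_mul]
  refine sum_congr rfl fun j _ => ?_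
  split_ifs <;> ring

theorem sum_digits_mul_pow_eq_sum_sum {R : Type*} [CommSemiring R] (T : ℕ → ℕ → R) (b : R)
    (m ℓ t : ℕ) :
    ∑ k ∈ range m, (∑ r ∈ range t, T k r * b ^ (r * ℓ)) * b ^ (k * ℓ) =
      ∑ r ∈ range t, ∑ k ∈ range m, T k r * b ^ ((k + r) * ℓ) := by
  simp_rw [sum_mul]
  rw [sum_comm]
  refine sum_congr rfl fun r _ => sum_congr rfl fun k _ => ?_
  ring

theorem block_decomposition_of_iterated_addition_general
    (n m ℓ t : ℕ) (hn : n = m * ℓ)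
    (A : ℕ → ℕ → Bool)
    (S : ℕ → ℕ)
    (hS : ∀ k < m, S k = ∑ i ∈ Finset.range n, ∑ j ∈ Finset.range ℓ,
      (if A i (k * ℓ + j) then 2 ^ j else 0))
    (T : ℕ → ℕ → ℕ)
    (hST : ∀ k < m, S k = ∑ r ∈ Finset.range t, T k r * 2 ^ (r * ℓ))
    (y : ℕ → ℕ)
    (hy : ∀ r < t, y r = ∑ k ∈ Finset.range m, T k r * 2 ^ ((k + r) * ℓ)) :
    (∑ i ∈ Finset.range n, ∑ j ∈ Finset.range n, (if A i j then 2 ^ j else 0)) =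
      ∑ r ∈ Finset.range t, y r := by
  subst hn
  calc ∑ i ∈ range (m * ℓ), ∑ j ∈ range (m * ℓ), (if A i j then 2 ^ j else 0)
      = ∑ k ∈ range m, S k * 2 ^ (k * ℓ) := by
        simp_rw [sum_range_mul_ite_pow_eq_sum_blocks (fun j => A _ j = true)]
        rw [sum_comm]
        exact sum_congr rfl fun k hk => by rw [hS k (mem_range.1 hk), sum_mul]
    _ = ∑ k ∈ range m, (∑ r ∈ range t, T k r * 2 ^ (r * ℓ)) * 2 ^ (k * ℓ) :=
        sum_congr rfl fun k hk => by rw [hST k (mem_range.1 hk)]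
    _ = ∑ r ∈ range t, ∑ k ∈ range m, T k r * 2 ^ ((k + r) * ℓ) :=
        sum_digits_mul_pow_eq_sum_sum T 2 m ℓ t
    _ = ∑ r ∈ range t, y r := (sum_congr rfl fun r hr => hy r (mem_range.1 hr)).symm

theorem block_decomposition_of_iterated_addition
    (n m ℓ t : ℕ) (hℓ : 0 < ℓ) (hn : n = m * ℓ)
    (ht : t = 1 + (Nat.clog 2 n + ℓ - 1) / ℓ)
    (A : ℕ → ℕ → Bool)
    (S : ℕ → ℕ)
    (hS : ∀ k < m, S k = ∑ i ∈ Finset.range n, ∑ j ∈ Finset.range ℓ,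
      (if A i (k * ℓ + j) then 2 ^ j else 0))
    (hSlt : ∀ k < m, S k < 2 ^ (t * ℓ))
    (T : ℕ → ℕ → ℕ)
    (hTlt : ∀ k < m, ∀ r < t, T k r < 2 ^ ℓ)
    (hST : ∀ k < m, S k = ∑ r ∈ Finset.range t, T k r * 2 ^ (r * ℓ))
    (y : ℕ → ℕ)
    (hy : ∀ r < t, y r = ∑ k ∈ Finset.range m, T k r * 2 ^ ((k + r) * ℓ)) :
    (∑ i ∈ Finset.range n, ∑ j ∈ Finset.range n, (if A i j then 2 ^ j else 0)) =
      ∑ r ∈ Finset.range t, y r :=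
  block_decomposition_of_iterated_addition_general n m ℓ t hn A S hS T hST y hy
end

section
/- Fix ε ∈ (0, 1/2). For points p, q ∈ ℝ^d and threshold t > 0, define α(p,q) = (1/d)·Σ_{a=1}^d min(|p_a − q_a|/(2t), 1). If ‖p−q‖₁ ≤ t then (1/2)(1 − (1 − α(p,q))^d) ≤ (1/2)(1 − (1 − 1/(2d))^d), and if ‖p−q‖₁ ≥ (1+ε)t then (1/2)(1 − (1 − α(p,q))^d) ≥ (1/2)(1 − (1 − (1+ε)/(2d))^d). Moreover the gap between these two bounds is at least a constant times ε (for all d ≥ 1). -/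
/-!
Each coordinate contributes `min (|p a - q a| / (2t)) 1` to `d α`, so `α` is at most
`‖p - q‖₁ / (2dt)` and, because truncation at `1` is subadditive on nonnegative reals, at least
`min (‖p - q‖₁ / (2t), 1) / d`. The two threshold bounds then follow since `α ↦ (1 - (1 - α)^d) / 2`
is monotone on `α ≤ 1`. For the gap, put `x = 1 - 1/(2d)` and `y = 1 - (1 + ε)/(2d)`: the mean value
bound `x^d - y^d ≥ d y^(d-1) (x - y) = y^(d-1) ε / 2` and Bernoulli's inequality
`y^(d-1) ≥ y^d ≥ 1 - (1 + ε)/2 ≥ 1/4` give a gap of at least `ε / 16`.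
-/

noncomputable def l1CollisionParam {d : ℕ} (t : ℝ) (p q : Fin d → ℝ) : ℝ :=
  (1 / (d : ℝ)) * ∑ a : Fin d, min (|p a - q a| / (2 * t)) 1

noncomputable def disagreementProb (d : ℕ) (α : ℝ) : ℝ :=
  (1 / 2) * (1 - (1 - α) ^ d)

theorem min_sum_le_sum_min {ι R : Type*} [AddCommMonoid R] [LinearOrder R] [IsOrderedAddMonoid R]
    (s : Finset ι) (g : ι → R) {c : R} (hc : 0 ≤ c) (hg : ∀ i ∈ s, 0 ≤ g i) :
    min (∑ i ∈ s, g i) c ≤ ∑ i ∈ s, min (g i) c := by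
  by_cases h : ∃ i ∈ s, c ≤ g i
  · obtain ⟨i, hi, hci⟩ := h
    calc min (∑ i ∈ s, g i) c ≤ c := min_le_right _ _
      _ = min (g i) c := (min_eq_right hci).symm
      _ ≤ ∑ i ∈ s, min (g i) c := Finset.single_le_sum (fun j hj => le_min (hg j hj) hc) hi
  · push Not at h
    calc min (∑ i ∈ s, g i) c ≤ ∑ i ∈ s, g i := min_le_left _ _
      _ = ∑ i ∈ s, min (g i) c := Finset.sum_congr rfl fun i hi => (min_eq_left (h i hi).le).symm

theorem add_one_mul_pow_mul_sub_le_pow_sub_pow {R : Type*} [CommRing R] [LinearOrder R]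
    [IsOrderedRing R] {x y : R} (hy : 0 ≤ y) (hyx : y ≤ x) (n : ℕ) :
    (n + 1) * y ^ n * (x - y) ≤ x ^ (n + 1) - y ^ (n + 1) := by
  induction n with
  | zero => simp
  | succ n ih =>
    have hn : (0 : R) ≤ n + 1 := add_nonneg n.cast_nonneg zero_le_one
    have hterm : 0 ≤ (n + 1) * y ^ n * (x - y) :=
      mul_nonneg (mul_nonneg hn (pow_nonneg hy n)) (sub_nonneg.2 hyx)
    calc ((n + 1 : ℕ) + 1 : R) * y ^ (n + 1) * (x - y)
        = y * ((n + 1) * y ^ n * (x - y)) + y ^ (n + 1) * (x - y) := by push_cast; ring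
      _ ≤ x * (x ^ (n + 1) - y ^ (n + 1)) + y ^ (n + 1) * (x - y) := by
        exact add_le_add_left (mul_le_mul hyx ih hterm (hy.trans hyx)) _
      _ = x ^ (n + 1 + 1) - y ^ (n + 1 + 1) := by ring

section l1CollisionParam

variable {d : ℕ} {t : ℝ} (p q : Fin d → ℝ)

theorem l1CollisionParam_le_one : l1CollisionParam t p q ≤ 1 := by
  have hsum : ∑ a : Fin d, min (|p a - q a| / (2 * t)) 1 ≤ d := by
    simpa using Finset.sum_le_sum fun a (_ : a ∈ Finset.univ) =>
      min_le_right (|p a - q a| / (2 * t)) 1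
  rw [l1CollisionParam, one_div_mul_eq_div]
  exact div_le_one_of_le₀ hsum d.cast_nonneg

theorem l1CollisionParam_le_l1 :
    l1CollisionParam t p q ≤ 1 / (d : ℝ) * ((∑ a, |p a - q a|) / (2 * t)) := by
  unfold l1CollisionParam
  gcongr
  rw [Finset.sum_div]
  exact Finset.sum_le_sum fun a _ => min_le_left _ _

theorem min_l1_le_l1CollisionParam (ht : 0 ≤ t) :
    1 / (d : ℝ) * min ((∑ a, |p a - q a|) / (2 * t)) 1 ≤ l1CollisionParam t p q := by
  unfold l1CollisionParam
  gcongr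
  rw [Finset.sum_div]
  exact min_sum_le_sum_min _ _ zero_le_one fun a _ => by positivity

theorem l1CollisionParam_le_of_l1_le_mul {c : ℝ} (ht : 0 < t) (h : ∑ a, |p a - q a| ≤ c * t) :
    l1CollisionParam t p q ≤ c / (2 * d) :=
  calc l1CollisionParam t p q ≤ 1 / (d : ℝ) * ((∑ a, |p a - q a|) / (2 * t)) :=
        l1CollisionParam_le_l1 p q
    _ ≤ 1 / (d : ℝ) * (c * t / (2 * t)) := by gcongr
    _ = c / (2 * d) := by rw [mul_div_mul_right _ _ ht.ne']; ring

theorem div_le_l1CollisionParam_of_mul_le_l1 {c : ℝ} (ht : 0 < t) (hc : c ≤ 2)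
    (h : c * t ≤ ∑ a, |p a - q a|) : c / (2 * d) ≤ l1CollisionParam t p q :=
  calc c / (2 * d) = 1 / (d : ℝ) * min (c * t / (2 * t)) 1 := by
        rw [mul_div_mul_right _ _ ht.ne', min_eq_left (by linarith)]; ring
    _ ≤ 1 / (d : ℝ) * min ((∑ a, |p a - q a|) / (2 * t)) 1 := by gcongr
    _ ≤ l1CollisionParam t p q := min_l1_le_l1CollisionParam p q ht.le

end l1CollisionParam

theorem disagreementProb_mono {d : ℕ} {a b : ℝ} (hb : b ≤ 1) (hab : a ≤ b) :
    disagreementProb d a ≤ disagreementProb d b := by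
  have : (1 - b) ^ d ≤ (1 - a) ^ d := pow_le_pow_left₀ (sub_nonneg.2 hb) (by linarith) d
  unfold disagreementProb
  linarith

theorem le_disagreementProb_sub {ε : ℝ} (hε0 : 0 ≤ ε) (hε : ε ≤ 1 / 2) {d : ℕ} (hd : 1 ≤ d) :
    ε / 16 ≤ disagreementProb d ((1 + ε) / (2 * d)) - disagreementProb d (1 / (2 * d)) := by
  obtain ⟨n, rfl⟩ := Nat.exists_eq_add_of_le' hd
  unfold disagreementProb
  push_cast
  set u := (1 + ε) / (2 * ((n : ℝ) + 1)) with hu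
  set v := 1 / (2 * ((n : ℝ) + 1)) with hv
  have hu0 : 0 ≤ u := by positivity
  have hu_le : u ≤ 3 / 4 := by
    rw [hu, div_le_iff₀ (by positivity)]
    nlinarith [(n.cast_nonneg : (0 : ℝ) ≤ n)]
  have hvu : v ≤ u := by rw [hu, hv]; gcongr; linarith
  have hbernoulli : 1 / 4 ≤ (1 - u) ^ (n + 1) := by
    have h := one_add_mul_le_pow (a := -u) (by linarith) (n + 1)
    have hnu : ((n + 1 : ℕ) : ℝ) * u = (1 + ε) / 2 := by rw [hu]; push_cast; field_simp
    rw [← sub_eq_add_neg] at h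
    linarith
  have hpow : 1 / 4 ≤ (1 - u) ^ n :=
    hbernoulli.trans (pow_le_pow_of_le_one (by linarith) (by linarith) n.le_succ)
  have hmvt := add_one_mul_pow_mul_sub_le_pow_sub_pow (x := 1 - v) (y := 1 - u)
    (by linarith) (by linarith) n
  have hlin : ((n : ℝ) + 1) * (1 - u) ^ n * ((1 - v) - (1 - u)) = (1 - u) ^ n * ε / 2 := by
    rw [hu, hv]
    field_simp
    ring
  rw [hlin] at hmvt
  linarith [mul_le_mul_of_nonneg_right hpow hε0]

theorem lsh_collision_bounds :
    ∃ c : ℝ, 0 < c ∧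
      ∀ ε : ℝ, ε ∈ Set.Ioo (0 : ℝ) (1/2) →
      ∀ d : ℕ, 1 ≤ d →
      ∀ t : ℝ, 0 < t →
      ∀ p q : Fin d → ℝ,
      ∀ α : ℝ, α = (1 / (d : ℝ)) * ∑ a : Fin d, min (|p a - q a| / (2 * t)) 1 →
        ((∑ a : Fin d, |p a - q a| ≤ t →
            (1/2) * (1 - (1 - α) ^ d) ≤ (1/2) * (1 - (1 - 1 / (2 * (d : ℝ))) ^ d)) ∧
         ((1 + ε) * t ≤ ∑ a : Fin d, |p a - q a| →
            (1/2) * (1 - (1 - (1 + ε) / (2 * (d : ℝ))) ^ d) ≤ (1/2) * (1 - (1 - α) ^ d)) ∧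
         c * ε ≤ (1/2) * (1 - (1 - (1 + ε) / (2 * (d : ℝ))) ^ d) -
            (1/2) * (1 - (1 - 1 / (2 * (d : ℝ))) ^ d)) := by
  refine ⟨1 / 16, by norm_num, ?_⟩
  rintro ε ⟨hε0, hε⟩ d hd t ht p q α rfl
  have hnear_le_one : 1 / (2 * (d : ℝ)) ≤ 1 := by
    rw [div_le_one (by positivity)]
    exact_mod_cast (by omega : 1 ≤ 2 * d)
  refine ⟨fun hnear => ?_, fun hfar => ?_, ?_⟩
  · exact disagreementProb_mono hnear_le_one
      (l1CollisionParam_le_of_l1_le_mul p q ht (by rwa [one_mul]))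
  · exact disagreementProb_mono (l1CollisionParam_le_one p q)
      (div_le_l1CollisionParam_of_mul_le_l1 p q ht (by linarith) hfar)
  · have hgap := le_disagreementProb_sub hε0.le hε.le hd
    unfold disagreementProb at hgap
    linarith
end
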